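/- arXiv:2106.03969 — 2 statements merged into one kernel-verified Lean document; each statement's English description precedes it below -/
import Mathlib

section
/- Fix 0 < δ < 0.1 and a positive integer n. Let (X_1, …, X_n, Y_1, …, Y_n) have the distribution P determined by independent {+1,−1}-valued A_1, …, A_n, B, C with E[A_t] = e^{−δ}, E[B] = e^{−2δ}, E[C] = 0, via X_i = C·∏_{t≤i} A_t and Y_i = B·C·∏_{t≤i} A_t. Let (X'_1, …, X'_n, Y'_1, …, Y'_n) have the distribution P' determined by independent {+1,−1}-valued W, Z_1, …, Z_n with E[Z_t] = e^{−δ} and E[W] = 0, via X'_i = Y'_i = W·∏_{t≤i} Z_t. Then: (a) the pairwise correlations of P' are multiplicative along the path tree with vertices ordered X_1, Y_1, X_2, Y_2, …, X_n, Y_n; and (b) for all i, j ∈ [n], E_{P'}[X'_i X'_j] = E_P[X_i X_j], E_{P'}[Y'_i Y'_j] = E_P[Y_i Y_j], and |E_P[X_i Y_j] − E_{P'}[X'_i Y'_j]| ≤ 1 − e^{−2δ} ≤ 2δ; in particular all pairwise correlations of P and P' agree up to additive error 2δ. -/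
/-!
In both models the shared sign factors square to one, so every pairwise correlation is the
mean of a product of independent signs over the symmetric difference `{t ≤ i} △ {t ≤ j}`:
`E[X_i X_j] = E[Y_i Y_j] = E[X'_i X'_j] = E[X'_i Y'_j] = e^{-δ|i-j|}`, while `E[X_i Y_j]` carries
the extra factor `E[B] = e^{-2δ}`. The vertex `k` of the path tree has correlations
`e^{-δ|⌊k/2⌋ - ⌊l/2⌋|}`, which are multiplicative because `⌊k/2⌋` is monotone and a path in a
path graph never turns back.
-/

open MeasureTheory ProbabilityTheory SimpleGraph

/-- A symmetric function `μ` is multiplicative along a graph `G` if `μ u u = 1` and `μ u v`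
is the product of `μ` over the edges of any (hence, in a tree, the unique) path from `u` to
`v`. -/
def MultAlong {V : Type*} (G : SimpleGraph V) (μ : V → V → ℝ) : Prop :=
  (∀ u : V, μ u u = 1) ∧
  ∀ (u v : V) (p : G.Walk u v), p.IsPath →
    μ u v = (p.darts.map fun d => μ d.fst d.snd).prod

open Finset

theorem ProbabilityTheory.iIndepFun.integral_finset_prod_eq_prod_integral
    {Ω ι : Type*} [MeasurableSpace Ω] {μ : Measure Ω} {X : ι → Ω → ℝ} (hX : iIndepFun X μ)
    (mX : ∀ i, AEStronglyMeasurable (X i) μ) (s : Finset ι) :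
    ∫ ω, ∏ i ∈ s, X i ω ∂μ = ∏ i ∈ s, ∫ ω, X i ω ∂μ := by
  simp_rw [← prod_coe_sort s]
  exact (hX.precomp (g := ((↑) : s → ι)) Subtype.val_injective).integral_fun_prod_eq_prod_integral
    fun i => mX i

theorem ProbabilityTheory.iIndepFun.integral_prod_inl_mul_inr
    {Ω ι κ : Type*} [MeasurableSpace Ω] {μ : Measure Ω} {X : ι ⊕ κ → Ω → ℝ}
    (hX : iIndepFun X μ) (mX : ∀ i, AEStronglyMeasurable (X i) μ) (s : Finset ι) (k : κ) :
    ∫ ω, (∏ i ∈ s, X (.inl i) ω) * X (.inr k) ω ∂μ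
      = (∏ i ∈ s, ∫ ω, X (.inl i) ω ∂μ) * ∫ ω, X (.inr k) ω ∂μ := by
  simpa only [prod_disjSum, prod_singleton] using
    hX.integral_finset_prod_eq_prod_integral mX (s.disjSum {k})

theorem Finset.prod_mul_prod_eq_prod_symmDiff {α M : Type*} [DecidableEq α] [CommMonoid M]
    {f : α → M} (hf : ∀ x, f x * f x = 1) (s t : Finset α) :
    (∏ x ∈ s, f x) * ∏ x ∈ t, f x = ∏ x ∈ symmDiff s t, f x := by
  rw [← prod_union_inter, ← sup_eq_union, ← inf_eq_inter, ← symmDiff_sup_inf s t,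
    sup_eq_union, prod_union (disjoint_symmDiff_inf s t), mul_assoc, ← prod_mul_distrib,
    prod_eq_one fun x _ => hf x, mul_one]

theorem Fin.card_symmDiff_Iic {n : ℕ} (a b : Fin n) :
    (#(symmDiff (Iic a) (Iic b)) : ℝ) = |(a : ℝ) - b| := by
  wlog hab : a ≤ b generalizing a b
  · rw [symmDiff_comm, abs_sub_comm]
    exact this b a (le_of_not_ge hab)
  have hsub : Iic a ⊆ Iic b := Iic_subset_Iic.2 hab
  rw [symmDiff_of_le hsub, card_sdiff_of_subset hsub, Fin.card_Iic, Fin.card_Iic,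
    abs_sub_comm, abs_of_nonneg (sub_nonneg.2 (Nat.cast_le.2 hab))]
  push_cast [Nat.succ_sub_succ, Nat.cast_sub (Fin.le_def.1 hab)]
  ring

theorem exp_neg_pow_card_symmDiff_Iic {n : ℕ} (δ : ℝ) (i j : Fin n) :
    Real.exp (-δ) ^ #(symmDiff (Iic i) (Iic j)) = Real.exp (-δ * |(i : ℝ) - j|) := by
  rw [← Real.exp_nat_mul, Fin.card_symmDiff_Iic, mul_comm]

namespace SimpleGraph.pathGraph

variable {N : ℕ}

theorem lt_of_lt_of_notMem_support {u w v : Fin N} (q : (pathGraph N).Walk w v)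
    (hu : u ∉ q.support) (hw : u < w) : u < v := by
  induction q with
  | nil => exact hw
  | @cons w y v hwy q ih =>
    rw [Walk.support_cons, List.mem_cons, not_or] at hu
    have huy : (u : ℕ) ≠ y := fun h => hu.2 (Fin.ext h ▸ q.start_mem_support)
    refine ih hu.2 (Fin.lt_def.2 ?_)
    rw [Fin.lt_def] at hw
    rcases pathGraph_adj.mp hwy with h | h <;> omega

theorem gt_of_gt_of_notMem_support {u w v : Fin N} (q : (pathGraph N).Walk w v)
    (hu : u ∉ q.support) (hw : w < u) : v < u := by
  refine lt_of_le_of_ne (not_lt.1 fun hv => ?_) fun h => hu (h ▸ q.end_mem_support)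
  exact (lt_asymm hw) (lt_of_lt_of_notMem_support q.reverse (by simpa using hu) hv)

theorem sum_abs_sub_of_isPath {F : Fin N → ℝ} (hF : Monotone F) {u v : Fin N}
    {p : (pathGraph N).Walk u v} (hp : p.IsPath) :
    (p.darts.map fun d => |F d.fst - F d.snd|).sum = |F u - F v| := by
  induction p with
  | nil => simp
  | @cons u w v huw q ih =>
    obtain ⟨hq, hu⟩ := (Walk.cons_isPath_iff huw q).mp hp
    rw [Walk.darts_cons, List.map_cons, List.sum_cons, ih hq]
    dsimp only
    rcases pathGraph_adj.mp huw with h | h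
    · have hv := lt_of_lt_of_notMem_support q hu (Fin.lt_def.2 (by omega))
      have h1 : F u ≤ F w := hF (Fin.le_def.2 (by omega))
      have h2 : F w ≤ F v := hF (Fin.le_def.2 (by omega))
      rw [abs_of_nonpos (by linarith), abs_of_nonpos (by linarith),
        abs_of_nonpos (by linarith)]
      ring
    · have hv := gt_of_gt_of_notMem_support q hu (Fin.lt_def.2 (by omega))
      have h1 : F w ≤ F u := hF (Fin.le_def.2 (by omega))
      have h2 : F v ≤ F w := hF (Fin.le_def.2 (by rw [Fin.lt_def] at hv; omega))
      rw [abs_of_nonneg (by linarith), abs_of_nonneg (by linarith),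
        abs_of_nonneg (by linarith)]
      ring

theorem multAlong_exp_mul_abs_sub {F : Fin N → ℝ} (hF : Monotone F) (c : ℝ) :
    MultAlong (pathGraph N) fun k l => Real.exp (c * |F k - F l|) := by
  refine ⟨fun u => by simp, fun u v p hp => ?_⟩
  beta_reduce
  rw [← sum_abs_sub_of_isPath hF hp, ← List.sum_map_mul_left, Real.exp_list_sum,
    List.map_map]
  rfl

end SimpleGraph.pathGraph

theorem abs_mul_sub_self_le {b q : ℝ} (hb : b ≤ 1) (hq₀ : 0 ≤ q) (hq₁ : q ≤ 1) :
    |b * q - q| ≤ 1 - b := by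
  rw [abs_of_nonpos (by nlinarith)]
  nlinarith

theorem mul_prod_Iic_mul_mul_prod_Iic {Ω : Type*} {n : ℕ} {a : Fin n → Ω → ℝ} {c : Ω → ℝ}
    (ha : ∀ t ω, a t ω * a t ω = 1) (hc : ∀ ω, c ω * c ω = 1) (i j : Fin n) (ω : Ω) :
    (c ω * ∏ t ∈ Iic i, a t ω) * (c ω * ∏ t ∈ Iic j, a t ω)
      = ∏ t ∈ symmDiff (Iic i) (Iic j), a t ω := by
  rw [mul_mul_mul_comm, hc, one_mul, prod_mul_prod_eq_prod_symmDiff (ha · ω)]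

section SignedWalk

variable {Ω : Type*} [MeasurableSpace Ω] {μ : Measure Ω} {n : ℕ} {a : Fin n → Ω → ℝ} {δ : ℝ}
  {c : Ω → ℝ}

theorem integral_mul_prod_Iic_mul_mul_prod_Iic (hind : iIndepFun a μ)
    (hm : ∀ t, AEStronglyMeasurable (a t) μ) (ha : ∀ t ω, a t ω * a t ω = 1)
    (hmean : ∀ t, ∫ ω, a t ω ∂μ = Real.exp (-δ)) (hc : ∀ ω, c ω * c ω = 1) (i j : Fin n) :
    ∫ ω, (c ω * ∏ t ∈ Iic i, a t ω) * (c ω * ∏ t ∈ Iic j, a t ω) ∂μ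
      = Real.exp (-δ * |(i : ℝ) - j|) := by
  simp_rw [mul_prod_Iic_mul_mul_prod_Iic ha hc, hind.integral_finset_prod_eq_prod_integral hm,
    hmean, prod_const, exp_neg_pow_card_symmDiff_Iic]

theorem integral_mul_prod_Iic_mul_mul_mul_prod_Iic {κ : Type*} {e : κ → Ω → ℝ}
    (hind : iIndepFun (Sum.elim a e) μ) (hm : ∀ i, AEStronglyMeasurable (Sum.elim a e i) μ)
    (ha : ∀ t ω, a t ω * a t ω = 1) (hmean : ∀ t, ∫ ω, a t ω ∂μ = Real.exp (-δ))
    (hc : ∀ ω, c ω * c ω = 1) (k : κ) (i j : Fin n) :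
    ∫ ω, (c ω * ∏ t ∈ Iic i, a t ω) * (e k ω * c ω * ∏ t ∈ Iic j, a t ω) ∂μ
      = (∫ ω, e k ω ∂μ) * Real.exp (-δ * |(i : ℝ) - j|) := by
  have h : ∀ ω, (c ω * ∏ t ∈ Iic i, a t ω) * (e k ω * c ω * ∏ t ∈ Iic j, a t ω)
      = (∏ t ∈ symmDiff (Iic i) (Iic j), a t ω) * e k ω := fun ω => by
    rw [← mul_prod_Iic_mul_mul_prod_Iic ha hc]
    ring
  have hprod := hind.integral_prod_inl_mul_inr hm (symmDiff (Iic i) (Iic j)) k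
  simp only [Sum.elim_inl, Sum.elim_inr, hmean, prod_const, exp_neg_pow_card_symmDiff_Iic]
    at hprod
  simp_rw [h, hprod, mul_comm]

end SignedWalk

/-- **The counterexample distribution `P` is close to the tree model `P'`.** Let `P` be the law
of `(X_i, Y_i)` built from independent `±1` variables `A_t, B, C` with `E[A_t] = e^{−δ}`,
`E[B] = e^{−2δ}`, `E[C] = 0` via `X_i = C·∏_{t≤i}A_t`, `Y_i = B·C·∏_{t≤i}A_t`, and let `P'` be
the law of `(X'_i, Y'_i)` built from independent `±1` variables `W, Z_t` with `E[Z_t] = e^{−δ}`,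
`E[W] = 0` via `X'_i = Y'_i = W·∏_{t≤i}Z_t`. Then (a) the pairwise correlations of `P'` are
multiplicative along the path tree with vertices ordered `X_1, Y_1, X_2, Y_2, …, X_n, Y_n`, and
(b) the corresponding pairwise correlations of `P` and `P'` agree exactly on the `XX` and `YY`
pairs and up to additive error `1 − e^{−2δ} ≤ 2δ` on the `XY` pairs. -/
theorem counterexample_P_close_to_tree_model_P'
    {Ω : Type*} [MeasurableSpace Ω] (μ : Measure Ω) [IsProbabilityMeasure μ]
    {Ω' : Type*} [MeasurableSpace Ω'] (μ' : Measure Ω') [IsProbabilityMeasure μ']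
    (δ : ℝ) (hδ0 : 0 < δ) (n : ℕ)
    -- the distribution P
    (A : Fin n → Ω → ℝ) (B C : Ω → ℝ)
    (hval : ∀ (i : Fin n ⊕ Bool) (ω : Ω),
      Sum.elim A (fun b => if b then C else B) i ω = 1 ∨
      Sum.elim A (fun b => if b then C else B) i ω = -1)
    (hmeas : ∀ i : Fin n ⊕ Bool, Measurable (Sum.elim A (fun b => if b then C else B) i))
    (hindep : iIndepFun (m := fun _ : Fin n ⊕ Bool => Real.measurableSpace)
      (Sum.elim A (fun b => if b then C else B)) μ)
    (hA : ∀ t : Fin n, ∫ ω, A t ω ∂μ = Real.exp (-δ))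
    (hB : ∫ ω, B ω ∂μ = Real.exp (-2 * δ))
    (X Y : Fin n → Ω → ℝ)
    (hX : ∀ (i : Fin n) (ω : Ω), X i ω = C ω * ∏ t ∈ Finset.Iic i, A t ω)
    (hY : ∀ (i : Fin n) (ω : Ω), Y i ω = B ω * C ω * ∏ t ∈ Finset.Iic i, A t ω)
    -- the tree-structured distribution P'
    (Z : Fin n → Ω' → ℝ) (W : Ω' → ℝ)
    (hval' : ∀ (i : Fin n ⊕ Unit) (ω : Ω'),
      Sum.elim Z (fun _ => W) i ω = 1 ∨ Sum.elim Z (fun _ => W) i ω = -1)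
    (hmeas' : ∀ i : Fin n ⊕ Unit, Measurable (Sum.elim Z (fun _ => W) i))
    (hindep' : iIndepFun (m := fun _ : Fin n ⊕ Unit => Real.measurableSpace)
      (Sum.elim Z (fun _ => W)) μ')
    (hZ : ∀ t : Fin n, ∫ ω, Z t ω ∂μ' = Real.exp (-δ))
    (X' Y' : Fin n → Ω' → ℝ)
    (hX' : ∀ (i : Fin n) (ω : Ω'), X' i ω = W ω * ∏ t ∈ Finset.Iic i, Z t ω)
    (hY' : ∀ (i : Fin n) (ω : Ω'), Y' i ω = W ω * ∏ t ∈ Finset.Iic i, Z t ω)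
    -- the vertices of the path tree, in the order X_1, Y_1, X_2, Y_2, …, X_n, Y_n
    (R : Fin (2 * n) → Ω' → ℝ)
    (hR : ∀ (k : Fin (2 * n)) (ω : Ω'),
      R k ω = if (k : ℕ) % 2 = 0
        then X' ⟨(k : ℕ) / 2, by have := k.isLt; omega⟩ ω
        else Y' ⟨(k : ℕ) / 2, by have := k.isLt; omega⟩ ω) :
    -- (a) the correlations of P' are multiplicative along the path tree
    MultAlong (pathGraph (2 * n)) (fun k l => ∫ ω, R k ω * R l ω ∂μ') ∧
    -- (b) the correlations of P and P' agree up to additive error 2δ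
    (∀ i j : Fin n, ∫ ω, X' i ω * X' j ω ∂μ' = ∫ ω, X i ω * X j ω ∂μ) ∧
    (∀ i j : Fin n, ∫ ω, Y' i ω * Y' j ω ∂μ' = ∫ ω, Y i ω * Y j ω ∂μ) ∧
    (∀ i j : Fin n,
      |(∫ ω, X i ω * Y j ω ∂μ) - ∫ ω, X' i ω * Y' j ω ∂μ'| ≤ 1 - Real.exp (-2 * δ)) ∧
    (1 - Real.exp (-2 * δ) ≤ 2 * δ) := by
  have hA1 : ∀ t ω, A t ω * A t ω = 1 := fun t ω => mul_self_eq_one_iff.2 (hval (.inl t) ω)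
  have hB1 : ∀ ω, B ω * B ω = 1 := fun ω => mul_self_eq_one_iff.2 (hval (.inr false) ω)
  have hC1 : ∀ ω, C ω * C ω = 1 := fun ω => mul_self_eq_one_iff.2 (hval (.inr true) ω)
  have hBC1 : ∀ ω, B ω * C ω * (B ω * C ω) = 1 := fun ω => by
    rw [mul_mul_mul_comm, hB1, hC1, one_mul]
  have hZ1 : ∀ t ω, Z t ω * Z t ω = 1 := fun t ω => mul_self_eq_one_iff.2 (hval' (.inl t) ω)
  have hW1 : ∀ ω, W ω * W ω = 1 := fun ω => mul_self_eq_one_iff.2 (hval' (.inr ()) ω)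
  have hm i := (hmeas i).aestronglyMeasurable (μ := μ)
  have hm' i := (hmeas' i).aestronglyMeasurable (μ := μ')
  have hP {c : Ω → ℝ} (hc : ∀ ω, c ω * c ω = 1) := integral_mul_prod_Iic_mul_mul_prod_Iic
    (a := A) (hindep.precomp Sum.inl_injective :) (fun t => hm (.inl t)) hA1 hA hc
  have hP' := integral_mul_prod_Iic_mul_mul_prod_Iic (a := Z)
    (hindep'.precomp Sum.inl_injective :) (fun t => hm' (.inl t)) hZ1 hZ hW1
  have hRX' : ∀ k ω, R k ω = X' ⟨(k : ℕ) / 2, by omega⟩ ω := fun k ω => by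
    rw [hR]; split_ifs <;> simp only [hX', hY']
  have hF : Monotone fun k : Fin (2 * n) => (((k : ℕ) / 2 : ℕ) : ℝ) :=
    fun k l hkl => Nat.cast_le.2 (Nat.div_le_div_right hkl)
  refine ⟨?_, fun i j => ?_, fun i j => ?_, fun i j => ?_, ?_⟩
  · convert pathGraph.multAlong_exp_mul_abs_sub hF (-δ) using 3 with k l
    simp_rw [hRX', hX']
    exact hP' _ _
  · simp_rw [hX, hX', hP hC1, hP']
  · simp_rw [hY, hY', hP hBC1, hP']
  · have hPB := integral_mul_prod_Iic_mul_mul_mul_prod_Iic hindep hm hA1 hA hC1 false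
    simp only [Bool.false_eq_true, if_false, hB] at hPB
    simp_rw [hX, hY, hX', hY', hPB, hP']
    exact abs_mul_sub_self_le (Real.exp_le_one_iff.2 (by linarith)) (Real.exp_nonneg _)
      (Real.exp_le_one_iff.2 (mul_nonpos_of_nonpos_of_nonneg (by linarith) (abs_nonneg _)))
  · linarith [Real.add_one_le_exp (-2 * δ)]
end

section
/- Let T = (V, E) be a finite tree, θ : E → [0, 1], and let μ be the symmetric function on V × V multiplicative along T with μ(e) = θ_e on edges (a ferromagnetic tree model). Let 0 < ε ≤ 10^{−5} and let μ̃ : V × V → ℝ be symmetric with |μ̃(u, v) − μ(u, v)| ≤ ε for all u, v ∈ V. Let T_CL be a maximum weight spanning tree of the complete graph on V with respect to μ̃, let W = {e ∈ E(T_CL) : μ̃(e) ≤ 1/10}, and let V_1, …, V_m be the vertex sets of the connected components of T_CL after removing the edges in W. Then for each i ∈ [m]: (i) the subgraph T[V_i] of T induced by V_i is connected (a subtree of T); and (ii) every edge e of T with both endpoints in V_i satisfies θ_e ≥ 1/10 − ε. -/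
/-!
Two facts drive the proof. By the cycle property of a maximum weight spanning tree, `μ̃(x, y)`
is at most the weight of every edge on the `T_CL`-path from `x` to `y`; hence vertices in
different components `V_i` satisfy `μ̃(x, y) ≤ 1/10`. In a ferromagnetic tree model `μ` is
multiplicative along `T`-paths with factors in `[0, 1]`, so `μ(w, w') = μ(w, x) μ(x, w')` for
`x` on the `T`-path from `w` to `w'`, and `μ(w, w')` is at most `θ_e` for every edge `e` of
that path.

For (i): if `ww'` is an edge of `T_CL` with `μ̃(w, w') > 1/10` and `x` on the `T`-path between
them lay in another component than `w` and `w'`, then `μ(w, w') ≤ (1/10 + ε)² < 1/10 - ε`, a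
contradiction; so the `T`-paths along strong edges stay inside `V_i`. For (ii): an edge `uv` of
`T` is a bridge, so a walk from `u` to `v` through strong edges crosses it along some strong
edge `ww'`, whose `T`-path then contains `uv`, and `θ_uv ≥ μ(w, w') ≥ μ̃(w, w') - ε > 1/10 - ε`.
-/

open SimpleGraph

/-- The total weight of the edges of `G`, for a weight function `f` on unordered pairs. -/
noncomputable def edgeWeightSum {V : Type*} [Fintype V] (G : SimpleGraph V)
    (f : Sym2 V → ℝ) : ℝ :=
  ∑ e ∈ G.edgeSet.toFinite.toFinset, f e

section Reachability

variable {V : Type*} {G H : SimpleGraph V}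

theorem SimpleGraph.Reachable.of_forall_adj_reachable
    (h : ∀ a b, H.Adj a b → G.Reachable a b) {a b : V} (hab : H.Reachable a b) :
    G.Reachable a b := by
  obtain ⟨W⟩ := hab
  induction W with
  | nil => rfl
  | cons hadj _ ih => exact (h _ _ hadj).trans ih

theorem SimpleGraph.Connected.of_forall_adj_reachable (hH : H.Connected)
    (h : ∀ a b, H.Adj a b → G.Reachable a b) : G.Connected :=
  have := hH.nonempty
  ⟨fun a b => (hH a b).of_forall_adj_reachable h⟩

end Reachability

namespace List

variable {R : Type*} [CommSemiring R] [PartialOrder R] [IsOrderedRing R]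

theorem prod_le_one_of_mem_Icc {l : List R} (h : ∀ x ∈ l, x ∈ Set.Icc (0 : R) 1) :
    l.prod ≤ 1 := by
  induction l with
  | nil => simp
  | cons a l ih =>
    rw [forall_mem_cons] at h
    rw [prod_cons]
    exact mul_le_one₀ h.1.2 (prod_nonneg fun x hx => (h.2 x hx).1) (ih h.2)

theorem prod_le_of_mem_of_mem_Icc {l : List R} (h : ∀ x ∈ l, x ∈ Set.Icc (0 : R) 1) {a : R}
    (ha : a ∈ l) : l.prod ≤ a := by
  classical
  rw [(perm_cons_erase ha).prod_eq, prod_cons]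
  exact mul_le_of_le_one_right (h a ha).1
    (prod_le_one_of_mem_Icc fun x hx => h x (mem_of_mem_erase hx))

end List

section Exchange

variable {V : Type*} {T : SimpleGraph V} {p q : V}

theorem SimpleGraph.IsTree.not_reachable_deleteEdges_of_mem_edges (hT : T.IsTree)
    {P : T.Walk p q} (hP : P.IsPath) {e : Sym2 V} (he : e ∈ P.edges) :
    ¬(T.deleteEdges {e}).Reachable p q := by
  classical
  cases e with | h a b =>
  rw [reachable_deleteEdges_iff_exists_walk]
  rintro ⟨W, hW⟩
  rw [(hT.existsUnique_path p q).unique hP W.bypass_isPath] at he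
  exact hW (W.edges_bypass_subset_edges he)

theorem SimpleGraph.IsTree.sup_edge_deleteEdges (hT : T.IsTree) (hpq : p ≠ q)
    (hadj : ¬T.Adj p q) {P : T.Walk p q} (hP : P.IsPath) {e : Sym2 V} (he : e ∈ P.edges) :
    ((T ⊔ edge p q).deleteEdges {e}).IsTree := by
  have hne : e ≠ s(p, q) := by
    rintro rfl
    exact hadj (P.edges_subset_edgeSet he)
  have hqp : (T ⊔ edge p q).Adj q p := by simp [edge_adj, hpq.symm]
  have hcycle : (Walk.cons hqp (P.mapLe le_sup_left)).IsCycle := by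
    rw [Walk.cons_isCycle_iff, Walk.edges_mapLe_eq_edges]
    exact ⟨hP.mapLe _, fun h => hadj (by simpa [Sym2.eq_swap] using P.edges_subset_edgeSet h)⟩
  have hnotBridge : ¬(T ⊔ edge p q).IsBridge e := fun hb =>
    hb.notMem_edges_of_isCycle hcycle (by simp [he])
  refine ⟨?_, ?_⟩
  · cases e with | h a b =>
    exact (hT.connected.mono le_sup_left).connected_delete_edge_of_not_isBridge hnotBridge
  · rw [deleteEdges_sup, edge, deleteEdges_fromEdgeSet, Set.sdiff_singleton_eq_self
      (by simpa [eq_comm] using hne), ← edge]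
    exact (hT.isAcyclic.anti (deleteEdges_le _)).sup_edge_of_not_reachable
      (hT.not_reachable_deleteEdges_of_mem_edges hP he)

theorem edgeWeightSum_sup_edge_deleteEdges [Fintype V] (f : Sym2 V → ℝ) (hpq : p ≠ q)
    (hadj : ¬T.Adj p q) {e : Sym2 V} (he : e ∈ T.edgeSet) :
    edgeWeightSum ((T ⊔ edge p q).deleteEdges {e}) f = edgeWeightSum T f - f e + f s(p, q) := by
  classical
  have hne : s(p, q) ≠ e := by
    rintro rfl
    exact hadj he
  have hedges : ((T ⊔ edge p q).deleteEdges {e}).edgeSet.toFinite.toFinset =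
      insert s(p, q) (T.edgeSet.toFinite.toFinset.erase e) := by
    ext x
    simp only [Set.Finite.mem_toFinset, edgeSet_deleteEdges, edgeSet_sup, edgeSet_edge_of_ne hpq,
      Finset.mem_insert, Finset.mem_erase]
    grind
  have hnotMem : s(p, q) ∉ T.edgeSet.toFinite.toFinset.erase e := by simp [hadj]
  unfold edgeWeightSum
  rw [hedges, Finset.sum_insert hnotMem,
    ← Finset.add_sum_erase _ f (T.edgeSet.toFinite.mem_toFinset.mpr he)]
  ring

end Exchange

def IsMaxWeightSpanningTree {V : Type*} [Fintype V] (f : Sym2 V → ℝ) (T : SimpleGraph V) :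
    Prop :=
  T.IsTree ∧ ∀ T' : SimpleGraph V, T'.IsTree → edgeWeightSum T' f ≤ edgeWeightSum T f

namespace IsMaxWeightSpanningTree

variable {V : Type*} [Fintype V] {f : Sym2 V → ℝ} {T : SimpleGraph V}

/-- The cycle property: otherwise exchanging `e` for `pq` would give a heavier spanning tree. -/
theorem le_of_mem_edges (hT : IsMaxWeightSpanningTree f T) {p q : V} (hpq : p ≠ q)
    {P : T.Walk p q} (hP : P.IsPath) {e : Sym2 V} (he : e ∈ P.edges) : f s(p, q) ≤ f e := by
  by_cases hadj : T.Adj p q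
  · rw [(hT.1.existsUnique_path p q).unique hP (Walk.IsPath.of_adj hadj)] at he
    obtain rfl : e = s(p, q) := by simpa using he
    rfl
  · have hle := hT.2 _ (hT.1.sup_edge_deleteEdges hpq hadj hP he)
    rw [edgeWeightSum_sup_edge_deleteEdges f hpq hadj (P.edges_subset_edgeSet he)] at hle
    linarith

theorem le_of_not_reachable_deleteEdges (hT : IsMaxWeightSpanningTree f T) (t : ℝ) {x y : V}
    (hxy : ¬(T.deleteEdges {e | f e ≤ t}).Reachable x y) : f s(x, y) ≤ t := by
  have hne : x ≠ y := by
    rintro rfl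
    exact hxy .rfl
  obtain ⟨P, hP⟩ := hT.1.connected.exists_isPath x y
  by_contra! hlt
  exact hxy ⟨P.toDeleteEdges _ fun e he =>
    not_le.mpr (hlt.trans_le (hT.le_of_mem_edges hne hP he))⟩

end IsMaxWeightSpanningTree

namespace MultAlong

variable {V : Type*} {G : SimpleGraph V} {μ : V → V → ℝ}

theorem eq_mul_of_mem_support (hμ : MultAlong G μ) {p q x : V} {P : G.Walk p q}
    (hP : P.IsPath) (hx : x ∈ P.support) : μ p q = μ p x * μ x q := by
  classical
  rw [hμ.2 p q P hP, ← P.take_spec hx, Walk.darts_append, List.map_append, List.prod_append,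
    ← hμ.2 p x _ (hP.takeUntil hx), ← hμ.2 x q _ (hP.dropUntil hx)]

theorem nonneg (hμ : MultAlong G μ)
    (hedge : ∀ u v, G.Adj u v → μ u v ∈ Set.Icc (0 : ℝ) 1) (hG : G.Preconnected) (p q : V) :
    0 ≤ μ p q := by
  obtain ⟨P, hP⟩ := hG.exists_isPath p q
  rw [hμ.2 p q P hP]
  refine List.prod_nonneg fun a ha => ?_
  obtain ⟨d, -, rfl⟩ := List.mem_map.mp ha
  exact (hedge _ _ d.adj).1

theorem le_of_mem_darts (hμ : MultAlong G μ)
    (hedge : ∀ u v, G.Adj u v → μ u v ∈ Set.Icc (0 : ℝ) 1) {p q : V} {P : G.Walk p q}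
    (hP : P.IsPath) {d : G.Dart} (hd : d ∈ P.darts) : μ p q ≤ μ d.fst d.snd := by
  rw [hμ.2 p q P hP]
  refine List.prod_le_of_mem_of_mem_Icc (fun a ha => ?_) (List.mem_map_of_mem hd)
  obtain ⟨d', -, rfl⟩ := List.mem_map.mp ha
  exact hedge _ _ d'.adj

variable {μt : V → V → ℝ} {ε t : ℝ} {H : SimpleGraph V}

theorem lt_or_lt_of_mem_support (hμ : MultAlong G μ)
    (hedge : ∀ u v, G.Adj u v → μ u v ∈ Set.Icc (0 : ℝ) 1) (hG : G.Preconnected)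
    (happrox : ∀ u v, |μt u v - μ u v| ≤ ε) (hεt : (t + ε) ^ 2 < t - ε) {w w' x : V}
    {P : G.Walk w w'} (hP : P.IsPath) (hx : x ∈ P.support) (h : t < μt w w') :
    t < μt w x ∨ t < μt x w' := by
  by_contra! hle
  have hwx := (abs_le.mp (happrox w x)).1
  have hxw' := (abs_le.mp (happrox x w')).1
  have hww' := (abs_le.mp (happrox w w')).2
  have hprod : μ w x * μ x w' ≤ (t + ε) ^ 2 := by
    rw [sq]
    exact mul_le_mul (by linarith) (by linarith) (hμ.nonneg hedge hG x w')
      ((hμ.nonneg hedge hG w x).trans (by linarith))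
  rw [← hμ.eq_mul_of_mem_support hP hx] at hprod
  linarith

theorem connected_induce_supp (hμ : MultAlong G μ)
    (hedge : ∀ u v, G.Adj u v → μ u v ∈ Set.Icc (0 : ℝ) 1) (hG : G.Preconnected)
    (happrox : ∀ u v, |μt u v - μ u v| ≤ ε) (hεt : (t + ε) ^ 2 < t - ε)
    (hweak : ∀ x y, ¬H.Reachable x y → μt x y ≤ t) (hstrong : ∀ x y, H.Adj x y → t < μt x y)
    (c : H.ConnectedComponent) : (G.induce c.supp).Connected := by
  refine c.connected_toSimpleGraph.of_forall_adj_reachable ?_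
  rintro ⟨a, ha⟩ ⟨b, hb⟩ (hab : H.Adj a b)
  obtain ⟨P, hP⟩ := hG.exists_isPath a b
  have hreach : ∀ x ∈ P.support, H.Reachable a x := by
    intro x hx
    by_contra hax
    rcases hμ.lt_or_lt_of_mem_support hedge hG happrox hεt hP hx (hstrong a b hab) with h | h
    · exact (hweak a x hax).not_gt h
    · exact (hweak x b fun hxb => hax (hab.reachable.trans hxb.symm)).not_gt h
  exact (P.induce c.supp fun x hx =>
    (ConnectedComponent.sound (hreach x hx).symm).trans ha).reachable

theorem lt_of_adj_of_reachable (hμ : MultAlong G μ) (hμsymm : ∀ u v, μ u v = μ v u)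
    (hedge : ∀ u v, G.Adj u v → μ u v ∈ Set.Icc (0 : ℝ) 1) (hG : G.IsTree)
    (happrox : ∀ u v, |μt u v - μ u v| ≤ ε) (hstrong : ∀ x y, H.Adj x y → t < μt x y)
    {u v : V} (huv : G.Adj u v) (hreach : H.Reachable u v) : t - ε < μ u v := by
  have hbridge : ¬(G.deleteEdges {s(u, v)}).Reachable u v :=
    isAcyclic_iff_forall_adj_isBridge.mp hG.isAcyclic huv
  obtain ⟨a, b, hab, hnr⟩ : ∃ a b, H.Adj a b ∧ ¬(G.deleteEdges {s(u, v)}).Reachable a b := by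
    by_contra! h
    exact hbridge (hreach.of_forall_adj_reachable h)
  obtain ⟨P, hP⟩ := hG.connected.exists_isPath a b
  have he : s(u, v) ∈ P.edges := by
    by_contra he
    exact hnr (reachable_deleteEdges_iff_exists_walk.mpr ⟨P, he⟩)
  obtain ⟨d, hd, hde⟩ := List.mem_map.mp he
  have hμd : μ d.fst d.snd = μ u v := by
    rcases dart_edge_eq_mk'_iff'.mp hde with ⟨h1, h2⟩ | ⟨h1, h2⟩
    · rw [h1, h2]
    · rw [h1, h2, hμsymm]
  have hab_le := hμ.le_of_mem_darts hedge hP hd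
  have hab_ge := (abs_le.mp (happrox a b)).2
  linarith [hstrong a b hab]

end MultAlong

theorem chow_liu_structural_lemma_general
    {V : Type*} [Fintype V]
    (G : SimpleGraph V) (hG : G.IsTree)
    (μ : V → V → ℝ) (hμsymm : ∀ u v : V, μ u v = μ v u) (hμmult : MultAlong G μ)
    (hμedge : ∀ u v : V, G.Adj u v → μ u v ∈ Set.Icc (0 : ℝ) 1)
    (ε : ℝ) (hε1 : ε ≤ 1 / 100000)
    (μt : V → V → ℝ) (hμtsymm : ∀ u v : V, μt u v = μt v u)
    (happrox : ∀ u v : V, |μt u v - μ u v| ≤ ε)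
    (TCL : SimpleGraph V) (hTCL : TCL.IsTree)
    (hmax : ∀ T' : SimpleGraph V, T'.IsTree →
      edgeWeightSum T' (Sym2.lift ⟨μt, hμtsymm⟩) ≤ edgeWeightSum TCL (Sym2.lift ⟨μt, hμtsymm⟩))
    -- `H` is `T_CL` with the weak edges `W` removed
    (H : SimpleGraph V)
    (hH : H = TCL.deleteEdges {e : Sym2 V | Sym2.lift ⟨μt, hμtsymm⟩ e ≤ 1 / 10}) :
    ∀ c : H.ConnectedComponent,
      (G.induce {v : V | H.connectedComponentMk v = c}).Connected ∧
      (∀ u v : V, G.Adj u v → H.connectedComponentMk u = c → H.connectedComponentMk v = c →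
        1 / 10 - ε ≤ μ u v) := by
  intro c
  have hmst : IsMaxWeightSpanningTree (Sym2.lift ⟨μt, hμtsymm⟩) TCL := ⟨hTCL, hmax⟩
  have hweak : ∀ x y, ¬H.Reachable x y → μt x y ≤ 1 / 10 := fun x y hxy =>
    hmst.le_of_not_reachable_deleteEdges (1 / 10) (hH ▸ hxy)
  have hstrong : ∀ x y, H.Adj x y → 1 / 10 < μt x y := fun x y hxy => by
    subst hH
    simpa using (deleteEdges_adj.mp hxy).2
  have hεt : (1 / 10 + ε) ^ 2 < 1 / 10 - ε := by
    have : 0 ≤ ε := (abs_nonneg _).trans (happrox c.out c.out)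
    nlinarith
  refine ⟨hμmult.connected_induce_supp hμedge hG.connected.preconnected happrox hεt hweak
    hstrong c, fun u v huv hu hv => ?_⟩
  exact (hμmult.lt_of_adj_of_reachable hμsymm hμedge hG happrox hstrong huv
    (ConnectedComponent.exact (hu.trans hv.symm))).le

/-- **Structural lemma for Chow-Liu (each component induces a strongly-correlated subtree).**
Let `(T, θ)` be a ferromagnetic tree model (edge correlations `θ ∈ [0,1]`, here encoded by its
multiplicative correlation function `μ`), `0 < ε ≤ 10⁻⁵`, and let `μ̃` be `ε`-approximate
correlations. Let `T_CL` be a maximum weight spanning tree for `μ̃`, let `W` be its edges of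
`μ̃`-weight at most `1/10`, and consider the connected components `V_1, …, V_m` of `T_CL`
after removing `W`. Then each component induces a connected subtree `T[V_i]` of `T`, and every
edge of `T` with both endpoints in the same component has correlation at least `1/10 − ε`. -/
theorem chow_liu_structural_lemma
    {V : Type*} [Fintype V]
    (G : SimpleGraph V) (hG : G.IsTree)
    (μ : V → V → ℝ) (hμsymm : ∀ u v : V, μ u v = μ v u) (hμmult : MultAlong G μ)
    (hμedge : ∀ u v : V, G.Adj u v → μ u v ∈ Set.Icc (0 : ℝ) 1)
    (ε : ℝ) (hε0 : 0 < ε) (hε1 : ε ≤ 1 / 100000)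
    (μt : V → V → ℝ) (hμtsymm : ∀ u v : V, μt u v = μt v u)
    (happrox : ∀ u v : V, |μt u v - μ u v| ≤ ε)
    (TCL : SimpleGraph V) (hTCL : TCL.IsTree)
    (hmax : ∀ T' : SimpleGraph V, T'.IsTree →
      edgeWeightSum T' (Sym2.lift ⟨μt, hμtsymm⟩) ≤ edgeWeightSum TCL (Sym2.lift ⟨μt, hμtsymm⟩))
    -- `H` is `T_CL` with the weak edges `W` removed
    (H : SimpleGraph V)
    (hH : H = TCL.deleteEdges {e : Sym2 V | Sym2.lift ⟨μt, hμtsymm⟩ e ≤ 1 / 10}) :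
    ∀ c : H.ConnectedComponent,
      (G.induce {v : V | H.connectedComponentMk v = c}).Connected ∧
      (∀ u v : V, G.Adj u v → H.connectedComponentMk u = c → H.connectedComponentMk v = c →
        1 / 10 - ε ≤ μ u v) :=
  chow_liu_structural_lemma_general G hG μ hμsymm hμmult hμedge ε hε1 μt hμtsymm happrox TCL hTCL
    hmax H hH
end
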